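/- arXiv:2401.07295 — 2 statements merged into one kernel-verified Lean document; each statement's English description precedes it below -/
import Mathlib

section
/- For every positive integer m and every real number Λ > 1, one has ∑_{n=1}^∞ m^{1/Λ} / ( n^{1/Λ} (m+n) ) ≤ π / sin(π/Λ). -/
/-! With `a = 1 / Λ`, the summand is `f (n + 1)` for `f x = m ^ a / (x ^ a * (m + x))`, which is
positive and decreasing on `(0, ∞)`, so the sum is at most `∫₀^∞ f`. The substitution
`t = x / (m + x)` turns this integral into the Beta integral
`B(1 - a, a) = Γ(1 - a) Γ(a) = π / sin (π a)`. -/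

open MeasureTheory Set Real

lemma ofReal_rpow_mul_one_sub_rpow {u v t : ℝ} (ht : t ∈ Icc (0 : ℝ) 1) :
    ((t ^ (u - 1) * (1 - t) ^ (v - 1) : ℝ) : ℂ) =
      (t : ℂ) ^ ((u : ℂ) - 1) * (1 - (t : ℂ)) ^ ((v : ℂ) - 1) := by
  push_cast [Complex.ofReal_cpow ht.1, Complex.ofReal_cpow (sub_nonneg.2 ht.2)]
  rfl

lemma integrableOn_Ioo_rpow_mul_one_sub_rpow {u v : ℝ} (hu : 0 < u) (hv : 0 < v) :
    IntegrableOn (fun t : ℝ => t ^ (u - 1) * (1 - t) ^ (v - 1)) (Ioo 0 1) := by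
  have h := (Complex.betaIntegral_convergent (u := u) (v := v) (by simpa) (by simpa)).1
  refine IntegrableOn.congr_fun (h.mono_set Ioo_subset_Ioc_self).re (fun t ht => ?_)
    measurableSet_Ioo
  simp only [← ofReal_rpow_mul_one_sub_rpow (Ioo_subset_Icc_self ht), RCLike.re_to_complex,
    Complex.ofReal_re]

lemma integral_Ioo_rpow_mul_one_sub_rpow {u v : ℝ} (hu : 0 < u) (hv : 0 < v) :
    ∫ t in Ioo (0 : ℝ) 1, t ^ (u - 1) * (1 - t) ^ (v - 1) = ProbabilityTheory.beta u v := by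
  apply Complex.ofReal_injective
  rw [← integral_complex_ofReal, setIntegral_congr_fun measurableSet_Ioo
      fun t ht => ofReal_rpow_mul_one_sub_rpow (Ioo_subset_Icc_self ht),
    ← integral_Ioc_eq_integral_Ioo, ← intervalIntegral.integral_of_le zero_le_one,
    ← Complex.betaIntegral, Complex.betaIntegral_eq_Gamma_mul_div _ _ (by simpa) (by simpa),
    ProbabilityTheory.beta]
  push_cast [← Complex.Gamma_ofReal]
  rfl

lemma beta_one_sub_left_eq_pi_div_sin (a : ℝ) :
    ProbabilityTheory.beta (1 - a) a = π / sin (π * a) := by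
  rw [ProbabilityTheory.beta, sub_add_cancel, Real.Gamma_one, div_one, mul_comm,
    Real.Gamma_mul_Gamma_one_sub]

section DivAdd

variable {c : ℝ}

lemma image_div_add_Ioi (hc : 0 < c) : (fun x : ℝ => x / (c + x)) '' Ioi 0 = Ioo 0 1 := by
  ext t
  constructor
  · rintro ⟨x, hx : 0 < x, rfl⟩
    have hcx : 0 < c + x := by linarith
    exact ⟨div_pos hx hcx, (div_lt_one hcx).2 (by linarith)⟩
  · rintro ⟨ht0, ht1⟩
    refine ⟨c * t / (1 - t), div_pos (mul_pos hc ht0) (sub_pos.2 ht1), ?_⟩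
    field_simp
    ring

lemma strictMonoOn_div_add (hc : 0 < c) : StrictMonoOn (fun x : ℝ => x / (c + x)) (Ioi 0) := by
  intro x (hx : 0 < x) y (hy : 0 < y) hxy
  rw [div_lt_div_iff₀ (by linarith) (by linarith)]
  nlinarith

lemma hasDerivAt_div_add (hc : 0 < c) {x : ℝ} (hx : 0 < x) :
    HasDerivAt (fun x : ℝ => x / (c + x)) (c / (c + x) ^ 2) x := by
  refine ((hasDerivAt_id' x).div ((hasDerivAt_id' x).const_add c) (by positivity)).congr_deriv
    ?_
  ring

lemma integral_Ioo_eq_integral_Ioi_div_add (hc : 0 < c) (g : ℝ → ℝ) :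
    ∫ t in Ioo 0 1, g t = ∫ x in Ioi 0, c / (c + x) ^ 2 * g (x / (c + x)) := by
  rw [← image_div_add_Ioi hc, integral_image_eq_integral_abs_deriv_smul measurableSet_Ioi
    (fun x hx => (hasDerivAt_div_add hc hx).hasDerivWithinAt) (strictMonoOn_div_add hc).injOn]
  refine setIntegral_congr_fun measurableSet_Ioi fun x (hx : 0 < x) => ?_
  rw [smul_eq_mul, abs_of_pos (by positivity)]

lemma integrableOn_Ioo_iff_integrableOn_Ioi_div_add (hc : 0 < c) (g : ℝ → ℝ) :
    IntegrableOn g (Ioo 0 1) ↔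
      IntegrableOn (fun x => c / (c + x) ^ 2 * g (x / (c + x))) (Ioi 0) := by
  rw [← image_div_add_Ioi hc,
    integrableOn_image_iff_integrableOn_abs_deriv_smul measurableSet_Ioi
      (fun x hx => (hasDerivAt_div_add hc hx).hasDerivWithinAt) (strictMonoOn_div_add hc).injOn]
  refine integrableOn_congr_fun (fun x (hx : 0 < x) => ?_) measurableSet_Ioi
  rw [smul_eq_mul, abs_of_pos (by positivity)]

lemma div_sq_mul_rpow_mul_one_sub_rpow_div_add (hc : 0 < c) (a : ℝ) {x : ℝ} (hx : 0 < x) :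
    c / (c + x) ^ 2 * ((x / (c + x)) ^ (1 - a - 1) * (1 - x / (c + x)) ^ (a - 1)) =
      c ^ a / (x ^ a * (c + x)) := by
  have hcx : 0 < c + x := by linarith
  rw [show 1 - x / (c + x) = c / (c + x) by field_simp; ring, sub_sub_cancel_left,
    div_rpow hx.le hcx.le, div_rpow hc.le hcx.le, rpow_neg hx.le, rpow_neg hcx.le,
    rpow_sub_one hc.ne', rpow_sub_one hcx.ne']
  have := rpow_pos_of_pos hx a
  have := rpow_pos_of_pos hcx a
  field_simp

end DivAdd

/- Unlike `AntitoneOn.tsum_add_one_le_integral`, this only asks for antitonicity on `Ioi 0`, which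
is what integrands singular at `0` satisfy (there `0 ^ a = 0` and `x / 0 = 0`). -/
lemma AntitoneOn.tsum_add_one_le_integral_Ioi {f : ℝ → ℝ} (anti : AntitoneOn f (Ioi 0))
    (integrable : IntegrableOn f (Ioi 0)) (nonneg : ∀ x ∈ Ioi 0, 0 ≤ f x) :
    ∑' n : ℕ, f ((n : ℝ) + 1) ≤ ∫ x in Ioi 0, f x := by
  have hint (n : ℕ) : IntervalIntegrable f volume n (n + 1) :=
    (intervalIntegrable_iff_integrableOn_Ioc_of_le (by linarith)).2 <|
      integrable.mono_set <| Ioc_subset_Ioi_self.trans <| Ioi_subset_Ioi n.cast_nonneg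
  have step (n : ℕ) : f ((n : ℝ) + 1) ≤ ∫ x in (n : ℝ)..n + 1, f x :=
    calc f ((n : ℝ) + 1) = ∫ _ in (n : ℝ)..n + 1, f ((n : ℝ) + 1) := by simp
      _ ≤ ∫ x in (n : ℝ)..n + 1, f x :=
        intervalIntegral.integral_mono_on_of_le_Ioo (by linarith) intervalIntegrable_const
          (hint n) fun x hx => anti (mem_Ioi.2 (n.cast_nonneg.trans_lt hx.1))
            (mem_Ioi.2 n.cast_add_one_pos) hx.2.le
  refine Real.tsum_le_of_sum_range_le (fun n => nonneg _ (mem_Ioi.2 n.cast_add_one_pos))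
    fun N => ?_
  calc ∑ n ∈ Finset.range N, f ((n : ℝ) + 1)
      ≤ ∑ n ∈ Finset.range N, ∫ x in (n : ℝ)..n + 1, f x :=
        Finset.sum_le_sum fun n _ => step n
    _ = ∫ x in (0 : ℝ)..N, f x := by
      simpa using intervalIntegral.sum_integral_adjacent_intervals
        (a := fun k : ℕ => (k : ℝ)) (n := N) fun k _ => by simpa using hint k
    _ ≤ ∫ x in Ioi 0, f x := by
      rw [intervalIntegral.integral_of_le N.cast_nonneg]
      exact setIntegral_mono_set integrable
        (ae_restrict_of_forall_mem measurableSet_Ioi nonneg) Ioc_subset_Ioi_self.eventuallyLE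

section RpowDiv

variable {a c : ℝ}

lemma antitoneOn_rpow_div (ha : 0 ≤ a) (hc : 0 ≤ c) :
    AntitoneOn (fun x : ℝ => c ^ a / (x ^ a * (c + x))) (Ioi 0) := by
  intro x (hx : 0 < x) y (hy : 0 < y) hxy
  dsimp only
  gcongr

lemma integrableOn_Ioi_rpow_div (hc : 0 < c) (ha0 : 0 < a) (ha1 : a < 1) :
    IntegrableOn (fun x : ℝ => c ^ a / (x ^ a * (c + x))) (Ioi 0) := by
  refine ((integrableOn_Ioo_iff_integrableOn_Ioi_div_add hc _).1
    (integrableOn_Ioo_rpow_mul_one_sub_rpow (sub_pos.2 ha1) ha0)).congr_fun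
    (fun x hx => div_sq_mul_rpow_mul_one_sub_rpow_div_add hc a hx) measurableSet_Ioi

lemma integral_Ioi_rpow_div (hc : 0 < c) (ha0 : 0 < a) (ha1 : a < 1) :
    ∫ x in Ioi 0, c ^ a / (x ^ a * (c + x)) = π / sin (π * a) := by
  rw [← beta_one_sub_left_eq_pi_div_sin,
    ← integral_Ioo_rpow_mul_one_sub_rpow (sub_pos.2 ha1) ha0,
    integral_Ioo_eq_integral_Ioi_div_add hc]
  exact setIntegral_congr_fun measurableSet_Ioi
    fun x hx => (div_sq_mul_rpow_mul_one_sub_rpow_div_add hc a hx).symm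

end RpowDiv

/-- For every positive integer m and real Λ > 1,
∑_{n=1}^∞ m^{1/Λ} / (n^{1/Λ} (m+n)) ≤ π / sin(π/Λ). -/
theorem sum_le_pi_div_sin (m : ℕ) (hm : 1 ≤ m) (Λ : ℝ) (hΛ : 1 < Λ) :
    ∑' n : ℕ, (m : ℝ) ^ (1 / Λ) / (((n : ℝ) + 1) ^ (1 / Λ) * ((m : ℝ) + ((n : ℝ) + 1))) ≤
      Real.pi / Real.sin (Real.pi / Λ) := by
  have ha0 : 0 < 1 / Λ := by positivity
  have ha1 : 1 / Λ < 1 := (div_lt_one (by positivity)).2 hΛ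
  have hc : (0 : ℝ) < m := by exact_mod_cast hm
  calc _ ≤ ∫ x in Ioi 0, (m : ℝ) ^ (1 / Λ) / (x ^ (1 / Λ) * (m + x)) :=
        (antitoneOn_rpow_div ha0.le hc.le).tsum_add_one_le_integral_Ioi
          (integrableOn_Ioi_rpow_div hc ha0 ha1) fun x (hx : 0 < x) => by positivity
    _ = π / sin (π / Λ) := by rw [integral_Ioi_rpow_div hc ha0 ha1, mul_one_div]
end

section
/- (θ-Hilbert's inequality.) Let Λ, Λ' > 1 be real numbers with 1/Λ + 1/Λ' = 1 (so Λ' = Λ/(Λ−1)), and let {a_m}_{m∈ℕ} and {b_n}_{n∈ℕ} be sequences of nonnegative real numbers such that ∑_{m=1}^∞ a_m^Λ and ∑_{n=1}^∞ b_n^{Λ'} are finite. Then ∑_{m=1}^∞ ∑_{n=1}^∞ a_m b_n / (m+n) ≤ (π / sin(π/Λ)) · (∑_{m=1}^∞ a_m^Λ)^{1/Λ} · (∑_{n=1}^∞ b_n^{Λ'})^{1/Λ'}. -/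
/-!
With `p = Λ` and `q = Λ'`, write the kernel as `1 / (m + n) = u m n * v m n`, where
`u m n = (m / n) ^ (1 / (p q)) / (m + n) ^ (1 / p)` and
`v m n = (n / m) ^ (1 / (p q)) / (m + n) ^ (1 / q)`.
Hölder's inequality on `ℕ × ℕ`, applied to `a m * u m n` and `b n * v m n`, reduces the claim to the
row bound `∑ₙ u m n ^ p = ∑ₙ (m / n) ^ (1 / q) / (m + n) ≤ π / sin (π / p)` and the symmetric
column bound (Schur's test). Since the summand is decreasing in `n`, the row sum is at most
`∫₀^∞ (m / y) ^ (1 / q) / (m + y) dy`, which the substitution `y = m t / (1 - t)` turns into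
`B(1 / p, 1 / q) = Γ(1 / p) Γ(1 - 1 / p) = π / sin (π / p)`.

The estimate is carried out in `ℝ≥0∞`, where every series has a sum, and transferred to `ℝ` at
the end.
-/

open MeasureTheory Real Set ProbabilityTheory
open scoped ENNReal

theorem ENNReal.tsum_mul_le_Lp_mul_Lq {α : Type*} {p q : ℝ} (hpq : p.HolderConjugate q)
    (f g : α → ℝ≥0∞) :
    ∑' i, f i * g i ≤ (∑' i, f i ^ p) ^ (1 / p) * (∑' i, g i ^ q) ^ (1 / q) := by
  let _ : MeasurableSpace α := ⊤
  simpa only [lintegral_count, Pi.mul_apply] using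
    ENNReal.lintegral_mul_le_Lp_mul_Lq Measure.count hpq
      (Measurable.of_discrete (f := f)).aemeasurable (Measurable.of_discrete (f := g)).aemeasurable

theorem ENNReal.schur_test {ι κ : Type*} {p q : ℝ} (hpq : p.HolderConjugate q)
    (a : ι → ℝ≥0∞) (b : κ → ℝ≥0∞) {u v : ι → κ → ℝ≥0∞} {C : ℝ≥0∞}
    (hu : ∀ i, ∑' j, u i j ^ p ≤ C) (hv : ∀ j, ∑' i, v i j ^ q ≤ C) :
    ∑' i, ∑' j, a i * b j * (u i j * v i j) ≤
      C * (∑' i, a i ^ p) ^ (1 / p) * (∑' j, b j ^ q) ^ (1 / q) := by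
  have hrow : ∑' z : ι × κ, (a z.1 * u z.1 z.2) ^ p ≤ C * ∑' i, a i ^ p := calc
    _ = ∑' i, a i ^ p * ∑' j, u i j ^ p := by
      simp only [ENNReal.tsum_prod', ENNReal.mul_rpow_of_nonneg _ _ hpq.nonneg,
        ENNReal.tsum_mul_left]
    _ ≤ ∑' i, a i ^ p * C := ENNReal.tsum_le_tsum fun i => mul_le_mul_right (hu i) _
    _ = C * ∑' i, a i ^ p := by rw [ENNReal.tsum_mul_right, mul_comm]
  have hcol : ∑' z : ι × κ, (b z.2 * v z.1 z.2) ^ q ≤ C * ∑' j, b j ^ q := calc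
    _ = ∑' j, b j ^ q * ∑' i, v i j ^ q := by
      simp only [ENNReal.tsum_prod', ENNReal.mul_rpow_of_nonneg _ _ hpq.symm.nonneg]
      rw [ENNReal.tsum_comm]
      simp only [ENNReal.tsum_mul_left]
    _ ≤ ∑' j, b j ^ q * C := ENNReal.tsum_le_tsum fun j => mul_le_mul_right (hv j) _
    _ = C * ∑' j, b j ^ q := by rw [ENNReal.tsum_mul_right, mul_comm]
  calc ∑' i, ∑' j, a i * b j * (u i j * v i j)
      = ∑' z : ι × κ, (a z.1 * u z.1 z.2) * (b z.2 * v z.1 z.2) := by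
        rw [ENNReal.tsum_prod']
        exact tsum_congr fun i => tsum_congr fun j => by ring
    _ ≤ (∑' z : ι × κ, (a z.1 * u z.1 z.2) ^ p) ^ (1 / p) *
          (∑' z : ι × κ, (b z.2 * v z.1 z.2) ^ q) ^ (1 / q) :=
        ENNReal.tsum_mul_le_Lp_mul_Lq hpq _ _
    _ ≤ (C * ∑' i, a i ^ p) ^ (1 / p) * (C * ∑' j, b j ^ q) ^ (1 / q) := by
        have := hpq.one_div_nonneg
        have := hpq.symm.one_div_nonneg
        gcongr
    _ = C ^ (1 / p + 1 / q) * (∑' i, a i ^ p) ^ (1 / p) * (∑' j, b j ^ q) ^ (1 / q) := by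
        rw [ENNReal.mul_rpow_of_nonneg _ _ hpq.one_div_nonneg,
          ENNReal.mul_rpow_of_nonneg _ _ hpq.symm.one_div_nonneg,
          ENNReal.rpow_add_of_nonneg _ _ hpq.one_div_nonneg hpq.symm.one_div_nonneg]
        ring
    _ = C * (∑' i, a i ^ p) ^ (1 / p) * (∑' j, b j ^ q) ^ (1 / q) := by
        rw [hpq.one_div_add_one_div, one_div_one, ENNReal.rpow_one]

theorem AntitoneOn.tsum_ofReal_add_one_le_lintegral {f : ℝ → ℝ} (hf : AntitoneOn f (Ioi 0)) :
    ∑' n : ℕ, ENNReal.ofReal (f (n + 1)) ≤ ∫⁻ x in Ioi 0, ENNReal.ofReal (f x) := by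
  have hdisj : Pairwise (Function.onFun Disjoint fun n : ℕ => Ioc (n : ℝ) (n + 1)) := by
    intro i j hij
    simpa only [Function.onFun, Int.cast_natCast] using
      pairwise_disjoint_Ioc_intCast ℝ (Nat.cast_injective.ne hij : (i : ℤ) ≠ j)
  calc ∑' n : ℕ, ENNReal.ofReal (f (n + 1))
      ≤ ∑' n : ℕ, ∫⁻ x in Ioc (n : ℝ) (n + 1), ENNReal.ofReal (f x) := by
        refine ENNReal.tsum_le_tsum fun n => ?_
        have hn : (0 : ℝ) < n + 1 := by positivity
        calc ENNReal.ofReal (f (n + 1))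
            = ∫⁻ _ in Ioc (n : ℝ) (n + 1), ENNReal.ofReal (f (n + 1)) := by
              simp [Real.volume_Ioc]
          _ ≤ _ := setLIntegral_mono' measurableSet_Ioc fun x hx =>
              ENNReal.ofReal_le_ofReal (hf ((Nat.cast_nonneg n).trans_lt hx.1) hn hx.2)
    _ = ∫⁻ x in ⋃ n : ℕ, Ioc (n : ℝ) (n + 1), ENNReal.ofReal (f x) :=
        (lintegral_iUnion (fun _ => measurableSet_Ioc) hdisj _).symm
    _ ≤ ∫⁻ x in Ioi 0, ENNReal.ofReal (f x) :=
        lintegral_mono_set (iUnion_subset fun n => Ioc_subset_Ioi_self.trans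
          (Ioi_subset_Ioi (Nat.cast_nonneg n)))

theorem lintegral_rpow_mul_one_sub_rpow_eq_beta {α β : ℝ} (hα : 0 < α) (hβ : 0 < β) :
    ∫⁻ x in Ioo (0 : ℝ) 1, ENNReal.ofReal (x ^ (α - 1) * (1 - x) ^ (β - 1)) =
      ENNReal.ofReal (beta α β) := by
  have hB := beta_pos hα hβ
  have h := lintegral_betaPDF_eq_one hα hβ
  simp_rw [lintegral_betaPDF, mul_assoc, ENNReal.ofReal_mul (one_div_pos.2 hB).le] at h
  rw [lintegral_const_mul' _ _ ENNReal.ofReal_ne_top, mul_comm] at h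
  rw [ENNReal.eq_inv_of_mul_eq_one_left h, one_div, ENNReal.ofReal_inv_of_pos hB, inv_inv]

theorem ProbabilityTheory.beta_one_sub (r : ℝ) : beta r (1 - r) = π / sin (π * r) := by
  rw [beta, add_sub_cancel, Real.Gamma_one, div_one, Real.Gamma_mul_Gamma_one_sub]

theorem lintegral_div_rpow_div_add_eq {c r : ℝ} (hc : 0 < c) (hr₀ : 0 < r) (hr₁ : r < 1) :
    ∫⁻ y in Ioi (0 : ℝ), ENNReal.ofReal ((c / y) ^ (1 - r) / (c + y)) =
      ENNReal.ofReal (π / sin (π * r)) := by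
  have himage : (fun t => c * t / (1 - t)) '' Ioo 0 1 = Ioi 0 := by
    refine Subset.antisymm ?_ fun y (hy : 0 < y) => ⟨y / (c + y), ⟨by positivity, ?_⟩, ?_⟩
    · rintro _ ⟨t, ⟨ht₀, ht₁⟩, rfl⟩
      exact div_pos (mul_pos hc ht₀) (sub_pos.2 ht₁)
    · rw [div_lt_one (by positivity)]
      linarith
    · have := hc.ne'
      have : c + y ≠ 0 := by positivity
      show c * (y / (c + y)) / (1 - y / (c + y)) = y
      rw [one_sub_div this, add_sub_cancel_right]
      field_simp
  have hderiv : ∀ t ∈ Ioo (0 : ℝ) 1,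
      HasDerivWithinAt (fun t => c * t / (1 - t)) (c / (1 - t) ^ 2) (Ioo 0 1) t := by
    intro t ⟨_, ht₁⟩
    have h1t : 1 - t ≠ 0 := (sub_pos.2 ht₁).ne'
    exact (((hasDerivAt_id' t).const_mul c).div ((hasDerivAt_id' t).const_sub 1)
      h1t).hasDerivWithinAt.congr_deriv (by field_simp; ring)
  have hinj : InjOn (fun t => c * t / (1 - t)) (Ioo 0 1) := by
    intro s ⟨_, hs₁⟩ t ⟨_, ht₁⟩ h
    have := (sub_pos.2 hs₁).ne'
    have := (sub_pos.2 ht₁).ne'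
    field_simp at h
    nlinarith
  rw [← himage, lintegral_image_eq_lintegral_abs_deriv_mul measurableSet_Ioo hderiv hinj,
    ← beta_one_sub, ← lintegral_rpow_mul_one_sub_rpow_eq_beta hr₀ (sub_pos.2 hr₁)]
  refine setLIntegral_congr_fun measurableSet_Ioo fun t ⟨ht₀, ht₁⟩ => ?_
  have h1t : 0 < 1 - t := sub_pos.2 ht₁
  rw [← ENNReal.ofReal_mul (abs_nonneg _), abs_of_pos (by positivity)]
  congr 1
  have hquot : c / (c * t / (1 - t)) = (1 - t) / t := by field_simp
  have hsum : c + c * t / (1 - t) = c / (1 - t) := by field_simp; ring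
  rw [hquot, hsum, div_rpow h1t.le ht₀.le, rpow_sub_one h1t.ne', show r - 1 = -(1 - r) by ring,
    rpow_neg ht₀.le]
  field_simp

theorem antitoneOn_div_rpow_div_add {c s : ℝ} (hc : 0 ≤ c) (hs : 0 ≤ s) :
    AntitoneOn (fun y => (c / y) ^ s / (c + y)) (Ioi 0) := by
  intro x (hx : 0 < x) y (hy : 0 < y) hxy
  exact div_le_div₀ (by positivity) (rpow_le_rpow (by positivity)
    (div_le_div_of_nonneg_left hc hx hxy) hs) (by positivity) (by linarith)

theorem Real.HolderConjugate.sin_pi_div_eq {p q : ℝ} (hpq : p.HolderConjugate q) :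
    sin (π / q) = sin (π / p) := by
  rw [← mul_one_div π q, one_div q, ← hpq.one_sub_inv, mul_one_sub, sin_pi_sub, div_eq_mul_inv]

noncomputable def hilbertWeight (p q x y : ℝ) : ℝ := (x / y) ^ (1 / (p * q)) / (x + y) ^ (1 / p)

theorem hilbertWeight_nonneg (p q : ℝ) {x y : ℝ} (hx : 0 ≤ x) (hy : 0 ≤ y) :
    0 ≤ hilbertWeight p q x y := by
  unfold hilbertWeight
  positivity

theorem hilbertWeight_rpow {p q x y : ℝ} (hpq : p.HolderConjugate q) (hx : 0 < x) (hy : 0 < y) :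
    hilbertWeight p q x y ^ p = (x / y) ^ (1 / q) / (x + y) := by
  have := hpq.ne_zero
  rw [hilbertWeight, div_rpow (by positivity) (by positivity), ← rpow_mul (by positivity),
    ← rpow_mul (by positivity), one_div_mul_cancel this, rpow_one]
  congr 2
  field_simp

theorem hilbertWeight_mul_hilbertWeight {p q x y : ℝ} (hpq : p.HolderConjugate q) (hx : 0 < x)
    (hy : 0 < y) : hilbertWeight p q x y * hilbertWeight q p y x = 1 / (x + y) := by
  rw [hilbertWeight, hilbertWeight, mul_comm q p, add_comm y x, div_mul_div_comm,
    ← mul_rpow (by positivity) (by positivity), div_mul_div_cancel₀ hy.ne', div_self hx.ne',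
    one_rpow, ← rpow_add (by positivity), hpq.one_div_add_one_div, one_div_one, rpow_one]

theorem tsum_ofReal_hilbertWeight_rpow_le {p q c : ℝ} (hpq : p.HolderConjugate q) (hc : 0 < c) :
    ∑' n : ℕ, ENNReal.ofReal (hilbertWeight p q c (n + 1)) ^ p ≤
      ENNReal.ofReal (π / sin (π / p)) := by
  have hr₁ : 1 / p < 1 := (div_lt_one hpq.pos).2 hpq.lt
  have h1q : 1 / q = 1 - 1 / p := by rw [one_div, one_div, hpq.one_sub_inv]
  calc ∑' n : ℕ, ENNReal.ofReal (hilbertWeight p q c (n + 1)) ^ p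
      = ∑' n : ℕ, ENNReal.ofReal ((c / (n + 1)) ^ (1 - 1 / p) / (c + (n + 1))) :=
        tsum_congr fun n => by
          rw [ENNReal.ofReal_rpow_of_nonneg (hilbertWeight_nonneg _ _ hc.le (by positivity))
            hpq.nonneg, hilbertWeight_rpow hpq hc (by positivity), h1q]
    _ ≤ ∫⁻ y in Ioi 0, ENNReal.ofReal ((c / y) ^ (1 - 1 / p) / (c + y)) :=
        (antitoneOn_div_rpow_div_add hc.le (sub_pos.2 hr₁).le).tsum_ofReal_add_one_le_lintegral
    _ = ENNReal.ofReal (π / sin (π / p)) := by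
        rw [lintegral_div_rpow_div_add_eq hc hpq.one_div_pos hr₁, mul_one_div]

theorem ENNReal.tsum_ofReal_rpow {ι : Type*} {f : ι → ℝ} (hf : ∀ i, 0 ≤ f i) {p : ℝ} (hp : 0 ≤ p)
    (hs : Summable fun i => f i ^ p) :
    ∑' i, ENNReal.ofReal (f i) ^ p = ENNReal.ofReal (∑' i, f i ^ p) := by
  simp_rw [ENNReal.ofReal_rpow_of_nonneg (hf _) hp]
  exact (ENNReal.ofReal_tsum_of_nonneg (fun i => rpow_nonneg (hf i) p) hs).symm

theorem tsum_tsum_le_of_tsum_tsum_ofReal_le {ι κ : Type*} {f : ι → κ → ℝ} (hf : ∀ i j, 0 ≤ f i j)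
    {R : ℝ} (hR : 0 ≤ R) (h : ∑' i, ∑' j, ENNReal.ofReal (f i j) ≤ ENNReal.ofReal R) :
    ∑' i, ∑' j, f i j ≤ R := by
  have hfin : ∀ i, ∑' j, ENNReal.ofReal (f i j) ≠ ∞ := fun i =>
    ne_top_of_le_ne_top ENNReal.ofReal_ne_top ((ENNReal.le_tsum i).trans h)
  calc ∑' i, ∑' j, f i j = (∑' i, ∑' j, ENNReal.ofReal (f i j)).toReal := by
        rw [ENNReal.tsum_toReal_eq hfin]
        refine tsum_congr fun i => ?_
        rw [ENNReal.tsum_toReal_eq fun _ => ENNReal.ofReal_ne_top]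
        exact tsum_congr fun j => (ENNReal.toReal_ofReal (hf i j)).symm
    _ ≤ (ENNReal.ofReal R).toReal := ENNReal.toReal_mono ENNReal.ofReal_ne_top h
    _ = R := ENNReal.toReal_ofReal hR

theorem theta_hilbert_inequality_general (Λ Λ' : ℝ) (hΛ : 1 < Λ)
    (hconj : 1 / Λ + 1 / Λ' = 1) (a b : ℕ → ℝ)
    (ha : ∀ m, 0 ≤ a m) (hb : ∀ n, 0 ≤ b n)
    (hsa : Summable (fun m : ℕ => a (m + 1) ^ Λ))
    (hsb : Summable (fun n : ℕ => b (n + 1) ^ Λ')) :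
    ∑' m : ℕ, ∑' n : ℕ, a (m + 1) * b (n + 1) / (((m : ℝ) + 1) + ((n : ℝ) + 1)) ≤
      (Real.pi / Real.sin (Real.pi / Λ)) * (∑' m : ℕ, a (m + 1) ^ Λ) ^ (1 / Λ) *
        (∑' n : ℕ, b (n + 1) ^ Λ') ^ (1 / Λ') := by
  have hpq : Λ.HolderConjugate Λ' :=
    Real.holderConjugate_iff.mpr ⟨hΛ, by simpa only [one_div] using hconj⟩
  have hx : ∀ m : ℕ, (0 : ℝ) < m + 1 := fun m => by positivity
  have hC : 0 ≤ π / sin (π / Λ) := div_nonneg pi_pos.le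
    (sin_nonneg_of_nonneg_of_le_pi (by positivity) (div_le_self pi_pos.le hΛ.le))
  have hA : 0 ≤ ∑' m : ℕ, a (m + 1) ^ Λ := tsum_nonneg fun m => rpow_nonneg (ha _) _
  have hB : 0 ≤ ∑' n : ℕ, b (n + 1) ^ Λ' := tsum_nonneg fun n => rpow_nonneg (hb _) _
  refine tsum_tsum_le_of_tsum_tsum_ofReal_le
    (fun m n => div_nonneg (mul_nonneg (ha _) (hb _)) (add_pos (hx m) (hx n)).le)
    (mul_nonneg (mul_nonneg hC (rpow_nonneg hA _)) (rpow_nonneg hB _)) ?_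
  calc ∑' m : ℕ, ∑' n : ℕ, ENNReal.ofReal (a (m + 1) * b (n + 1) / ((m + 1) + (n + 1)))
      = ∑' m : ℕ, ∑' n : ℕ, ENNReal.ofReal (a (m + 1)) * ENNReal.ofReal (b (n + 1)) *
          (ENNReal.ofReal (hilbertWeight Λ Λ' (m + 1) (n + 1)) *
            ENNReal.ofReal (hilbertWeight Λ' Λ (n + 1) (m + 1))) := by
        refine tsum_congr fun m => tsum_congr fun n => ?_
        rw [← ENNReal.ofReal_mul (ha _), ← ENNReal.ofReal_mul (hilbertWeight_nonneg _ _
          (hx m).le (hx n).le), ← ENNReal.ofReal_mul (mul_nonneg (ha _) (hb _)),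
          hilbertWeight_mul_hilbertWeight hpq (hx m) (hx n), mul_one_div]
    _ ≤ ENNReal.ofReal (π / sin (π / Λ)) * (∑' m : ℕ, ENNReal.ofReal (a (m + 1)) ^ Λ) ^ (1 / Λ) *
          (∑' n : ℕ, ENNReal.ofReal (b (n + 1)) ^ Λ') ^ (1 / Λ') :=
        ENNReal.schur_test hpq _ _ (fun m => tsum_ofReal_hilbertWeight_rpow_le hpq (hx m))
          fun n => hpq.sin_pi_div_eq ▸ tsum_ofReal_hilbertWeight_rpow_le hpq.symm (hx n)
    _ = _ := by
        rw [ENNReal.tsum_ofReal_rpow (fun m => ha (m + 1)) hpq.nonneg hsa,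
          ENNReal.tsum_ofReal_rpow (fun n => hb (n + 1)) hpq.symm.nonneg hsb,
          ENNReal.ofReal_rpow_of_nonneg hA hpq.one_div_nonneg,
          ENNReal.ofReal_rpow_of_nonneg hB hpq.symm.one_div_nonneg, ← ENNReal.ofReal_mul hC,
          ← ENNReal.ofReal_mul (by positivity)]

/-- θ-Hilbert's inequality: for conjugate exponents Λ, Λ' > 1 with 1/Λ + 1/Λ' = 1 and
nonnegative sequences {a_m}, {b_n} with ∑ a_m^Λ < ∞ and ∑ b_n^{Λ'} < ∞,
∑_{m,n} a_m b_n/(m+n) ≤ (π/sin(π/Λ)) (∑ a_m^Λ)^{1/Λ} (∑ b_n^{Λ'})^{1/Λ'}. -/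
theorem theta_hilbert_inequality (Λ Λ' : ℝ) (hΛ : 1 < Λ) (hΛ' : 1 < Λ')
    (hconj : 1 / Λ + 1 / Λ' = 1) (a b : ℕ → ℝ)
    (ha : ∀ m, 0 ≤ a m) (hb : ∀ n, 0 ≤ b n)
    (hsa : Summable (fun m : ℕ => a (m + 1) ^ Λ))
    (hsb : Summable (fun n : ℕ => b (n + 1) ^ Λ')) :
    ∑' m : ℕ, ∑' n : ℕ, a (m + 1) * b (n + 1) / (((m : ℝ) + 1) + ((n : ℝ) + 1)) ≤
      (Real.pi / Real.sin (Real.pi / Λ)) * (∑' m : ℕ, a (m + 1) ^ Λ) ^ (1 / Λ) *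
        (∑' n : ℕ, b (n + 1) ^ Λ') ^ (1 / Λ') :=
  theta_hilbert_inequality_general Λ Λ' hΛ hconj a b ha hb hsa hsb
end
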